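/- For every j ∈ {1,…,n} and every pair of extended states w = (x; a) and z = (x; a') that agree in all coordinates except that a_j = W and a'_j = T, if busy(w) ≤ m−1 (so that both w and z are legitimate), then the mass function p satisfies the detailed balance equation p(w) · u_j · θ(busy(w)) = p(z) · v_j. -/

import Mathlib

/-- Activity state of a persistent user: Idle, Waiting, or Transmitting. -/
inductive Act : Type
  | I : Act
  | W : Act
  | T : Act
deriving DecidableEq

instance instFintypeAct : Fintype Act :=
  ⟨{Act.I, Act.W, Act.T}, fun x => by cases x <;> simp⟩

/-- Number of persistent users that are transmitting. -/
def busyP {n : ℕ} (a : Fin n → Act) : ℕ :=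
  (Finset.univ.filter (fun j => a j = Act.T)).card

/-- The factor `(α/β)^{[a=W]} (αu/(βv))^{[a=T]}` contributed by one persistent user. -/
noncomputable def fac (α β u v : ℝ) : Act → ℝ
  | Act.I => 1
  | Act.W => α / β
  | Act.T => α * u / (β * v)

/-- detailed balance for the Waiting ↔ Transmitting transitions of
persistent user `j`. -/
theorem detailed_balance_waiting_transmitting
    (m k n : ℕ) (hm : 0 < m) (hk : 0 < k) (hn : 0 < n)
    (θ : ℕ → ℝ)
    (hθ1 : ∀ b ≤ m, 0 ≤ θ b ∧ θ b ≤ 1)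
    (hθ2 : ∀ b < m, 0 < θ b)
    (hθ3 : θ m = 0)
    (lam μ : Fin k → ℝ) (hlam : ∀ i, 0 < lam i) (hμ : ∀ i, 0 < μ i)
    (α β u v : Fin n → ℝ)
    (hα : ∀ j, 0 < α j) (hβ : ∀ j, 0 < β j) (hu : ∀ j, 0 < u j) (hv : ∀ j, 0 < v j)
    (ρ : Fin k → ℝ) (hρ : ∀ i, ρ i = lam i / μ i)
    (B : ℝ) (hB : 0 < B)
    (p : (Fin k → ℕ) → (Fin n → Act) → ℝ)
    (hp : ∀ (x : Fin k → ℕ) (a : Fin n → Act),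
      p x a = B * (∏ r ∈ Finset.range (∑ i, x i + busyP a), θ r) *
        (∏ i, ρ i ^ (x i) / (x i).factorial) *
        ∏ j, fac (α j) (β j) (u j) (v j) (a j))
    (x : Fin k → ℕ) (a : Fin n → Act) (j : Fin n)
    (haj : a j = Act.W)
    (hw : ∑ i, x i + busyP a + 1 ≤ m) :
    p x a * u j * θ (∑ i, x i + busyP a) =
      p x (Function.update a j Act.T) * v j := by
  set a' := Function.update a j Act.T with ha'
  have hjnot : j ∉ Finset.univ.filter (fun j' => a j' = Act.T) := by
    simp [haj]
  have hfilter : Finset.univ.filter (fun j' => a' j' = Act.T)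
      = insert j (Finset.univ.filter (fun j' => a j' = Act.T)) := by
    ext j'
    by_cases h : j' = j
    · subst h; simp [ha']
    · simp [ha', Function.update_of_ne h, h]
  have hbusy : busyP a' = busyP a + 1 := by
    rw [busyP, busyP, hfilter, Finset.card_insert_of_notMem hjnot]
  have hprodT : (∏ j', fac (α j') (β j') (u j') (v j') (a' j'))
      = (α j * u j / (β j * v j)) *
        ∏ j' ∈ Finset.univ.erase j, fac (α j') (β j') (u j') (v j') (a j') := by
    rw [← Finset.mul_prod_erase Finset.univ _ (Finset.mem_univ j)]
    congr 1
    · simp [ha', fac]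
    · exact Finset.prod_congr rfl fun j' hj' => by
        rw [ha', Function.update_of_ne (Finset.ne_of_mem_erase hj')]
  have hprodW : (∏ j', fac (α j') (β j') (u j') (v j') (a j'))
      = (α j / β j) *
        ∏ j' ∈ Finset.univ.erase j, fac (α j') (β j') (u j') (v j') (a j') := by
    rw [← Finset.mul_prod_erase Finset.univ _ (Finset.mem_univ j), haj]
    rfl
  rw [hp x a, hp x a', hbusy, ← add_assoc, Finset.prod_range_succ, hprodT, hprodW]
  have hβ' := (hβ j).ne'
  have hv' := (hv j).ne'
  field_simp
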